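/- Let X = {(z₁,z₂) ∈ ℂ² : z₁z₂ + 1 ≠ 0} and f(z₁,z₂) = ((|z₁|² − |z₂|²)/2, log |z₁z₂ + 1|). For every p ∈ X with p ≠ (0,0), the kernel of the Fréchet derivative Df_p is a 2-dimensional ℝ-linear subspace of ℂ² ≅ ℝ⁴ on which the standard symplectic form ω vanishes identically (i.e. ω(u,v) = 0 for all u, v in the kernel). In other words, the regular fibres of f are Lagrangian. -/

import Mathlib

/-- The complement of the nodal curve `z₁z₂ + 1 = 0` in `ℂ²`. -/
def X0 : Set (ℂ × ℂ) := {z | z.1 * z.2 + 1 ≠ 0}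

/-- The focus-focus (nodal) Lagrangian fibration
`f(z₁,z₂) = ((|z₁|² − |z₂|²)/2, log |z₁z₂ + 1|)`. -/
noncomputable def f0 (z : ℂ × ℂ) : ℝ × ℝ :=
  ((‖z.1‖ ^ 2 - ‖z.2‖ ^ 2) / 2,
    Real.log ‖z.1 * z.2 + 1‖)

/-- The standard symplectic form on `ℂ²`: `ω(u,v) = ∑ⱼ Im(conj uⱼ · vⱼ)`. -/
def omega2 (u v : ℂ × ℂ) : ℝ :=
  ((starRingEnd ℂ) u.1 * v.1).im + ((starRingEnd ℂ) u.2 * v.2).im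

/-!
The two components of `f0` Poisson-commute. Their Hamiltonian vector fields `hamFst p`,
`hamSnd p` represent `Df_p` through `ω`, i.e. `Df_p u = (ω(hamFst p, u), ω(hamSnd p, u))`, so
`ker Df_p` is the `ω`-orthogonal of their real span `W`. The two vectors are orthogonal for the
Hermitian product whose imaginary part is `ω`; hence `W` is `ω`-isotropic, and for `p ≠ 0`, where
both are nonzero, it is a plane. An isotropic subspace of half dimension for a nondegenerate form is
its own orthogonal, so `ker Df_p = W` is Lagrangian.
-/

open Complex ComplexConjugate Module
open scoped InnerProductSpace
open LinearMap (BilinForm)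

namespace LinearMap.BilinForm

variable {R K M V : Type*} [CommRing R] [AddCommGroup M] [Module R M]
  [Field K] [AddCommGroup V] [Module K V]

theorem mem_orthogonal_span_iff {B : BilinForm R M} {s : Set M} {m : M} :
    m ∈ B.orthogonal (Submodule.span R s) ↔ ∀ n ∈ s, B n m = 0 :=
  ⟨fun h n hn => h n (Submodule.subset_span hn),
    fun h _ hn => Submodule.span_le (p := LinearMap.ker (B.flip m)).mpr h hn⟩

theorem ker_prod_eq_orthogonal_span_pair (B : BilinForm R M) (x y : M) :
    LinearMap.ker ((B x).prod (B y)) = B.orthogonal (Submodule.span R {x, y}) := by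
  ext m
  rw [mem_orthogonal_span_iff]
  simp

theorem span_pair_le_orthogonal {B : BilinForm R M} (hB : B.IsAlt) {x y : M} (hxy : B x y = 0) :
    Submodule.span R {x, y} ≤ B.orthogonal (Submodule.span R {x, y}) := by
  have hyx : B y x = 0 := hB.isRefl x y hxy
  refine Submodule.span_le.mpr fun m hm => mem_orthogonal_span_iff.mpr fun n hn => ?_
  rcases hn with rfl | rfl <;> rcases hm with rfl | rfl <;> simp_all [hB.self_eq_zero]

theorem orthogonal_eq_self_of_le_orthogonal [FiniteDimensional K V] {B : BilinForm K V}
    (hB : B.Nondegenerate) {W : Submodule K V} (hW : W ≤ B.orthogonal W)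
    (hdim : 2 * finrank K W = finrank K V) : B.orthogonal W = W :=
  (Submodule.eq_of_le_of_finrank_eq hW (by rw [finrank_orthogonal hB]; omega)).symm

end LinearMap.BilinForm

def herm2 (u v : ℂ × ℂ) : ℂ := conj u.1 * v.1 + conj u.2 * v.2

theorem omega2_eq_im_herm2 (u v : ℂ × ℂ) : omega2 u v = (herm2 u v).im :=
  (add_im _ _).symm

theorem herm2_self (u : ℂ × ℂ) : herm2 u u = ((‖u.1‖ ^ 2 + ‖u.2‖ ^ 2 : ℝ) : ℂ) := by
  push_cast
  simp only [herm2, conj_mul']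

theorem sq_norm_add_sq_norm_pos {u : ℂ × ℂ} (hu : u ≠ 0) : 0 < ‖u.1‖ ^ 2 + ‖u.2‖ ^ 2 := by
  have : u.1 ≠ 0 ∨ u.2 ≠ 0 := by
    by_contra! h
    exact hu (Prod.ext h.1 h.2)
  rcases this with h | h <;> positivity

theorem herm2_self_ne_zero {u : ℂ × ℂ} (hu : u ≠ 0) : herm2 u u ≠ 0 := by
  rw [herm2_self, ofReal_ne_zero]
  exact (sq_norm_add_sq_norm_pos hu).ne'

theorem herm2_smul_add_smul (u v w : ℂ × ℂ) (s t : ℝ) :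
    herm2 u (s • v + t • w) = s * herm2 u v + t * herm2 u w := by
  simp only [herm2, Prod.fst_add, Prod.snd_add, Prod.smul_fst, Prod.smul_snd, real_smul]
  ring

theorem linearIndependent_pair_of_herm2_eq_zero {u v : ℂ × ℂ} (hu : u ≠ 0) (hv : v ≠ 0)
    (huv : herm2 u v = 0) : LinearIndependent ℝ ![u, v] := by
  refine LinearIndependent.pair_iff.mpr fun s t hst => ?_
  have hs : s = 0 := by
    have h := herm2_smul_add_smul u u v s t
    rw [hst, huv, mul_zero, add_zero, eq_comm, show herm2 u 0 = 0 by simp [herm2]] at h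
    exact_mod_cast (mul_eq_zero.mp h).resolve_right (herm2_self_ne_zero hu)
  subst hs
  simp only [zero_smul, zero_add, smul_eq_zero] at hst
  exact ⟨rfl, hst.resolve_right hv⟩

noncomputable def omega2Form : BilinForm ℝ (ℂ × ℂ) :=
  LinearMap.mk₂ ℝ omega2
    (fun u u' v => by simp only [omega2, Prod.fst_add, Prod.snd_add, map_add, add_mul, add_im]; ring)
    (fun c u v => by
      simp only [omega2, Prod.smul_fst, Prod.smul_snd, real_smul, map_mul, conj_ofReal, mul_assoc,
        im_ofReal_mul, smul_eq_mul, mul_add])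
    (fun u v v' => by simp only [omega2, Prod.fst_add, Prod.snd_add, mul_add, add_im]; ring)
    (fun c u v => by
      simp only [omega2, Prod.smul_fst, Prod.smul_snd, real_smul, mul_left_comm _ (c : ℂ),
        im_ofReal_mul, smul_eq_mul, mul_add])

@[simp]
theorem omega2Form_apply (u v : ℂ × ℂ) : omega2Form u v = omega2 u v := rfl

theorem omega2Form_isAlt : omega2Form.IsAlt := fun u => by
  rw [omega2Form_apply, omega2_eq_im_herm2, herm2_self, ofReal_im]

theorem omega2_I_smul_self (u : ℂ × ℂ) : omega2 u (I • u) = ‖u.1‖ ^ 2 + ‖u.2‖ ^ 2 := by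
  have h : herm2 u (I • u) = I * herm2 u u := by
    simp only [herm2, Prod.smul_fst, Prod.smul_snd, smul_eq_mul]
    ring
  rw [omega2_eq_im_herm2, h, herm2_self, I_mul_im, ofReal_re]

theorem omega2Form_nondegenerate : omega2Form.Nondegenerate := by
  refine omega2Form_isAlt.isRefl.nondegenerate_iff_separatingLeft.mpr fun u hu => ?_
  by_contra h
  have := hu (I • u)
  rw [omega2Form_apply, omega2_I_smul_self] at this
  exact (sq_norm_add_sq_norm_pos h).ne' this

noncomputable def hamFst (p : ℂ × ℂ) : ℂ × ℂ := (-I * p.1, I * p.2)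

noncomputable def hamSnd (p : ℂ × ℂ) : ℂ × ℂ :=
  (-I * conj (p.2 / (p.1 * p.2 + 1)), -I * conj (p.1 / (p.1 * p.2 + 1)))

theorem herm2_hamFst_hamSnd (p : ℂ × ℂ) : herm2 (hamFst p) (hamSnd p) = 0 := by
  simp only [herm2, hamFst, hamSnd, map_mul, map_neg, conj_I, map_div₀]
  ring

theorem hamFst_ne_zero {p : ℂ × ℂ} (hp0 : p ≠ 0) : hamFst p ≠ 0 := by
  contrapose! hp0
  simpa [hamFst, Prod.ext_iff] using hp0

theorem hamSnd_ne_zero {p : ℂ × ℂ} (hp0 : p ≠ 0) (hp : p ∈ X0) : hamSnd p ≠ 0 := by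
  contrapose! hp0
  simp only [hamSnd, Prod.ext_iff, Prod.fst_zero, Prod.snd_zero, mul_eq_zero, neg_eq_zero,
    I_ne_zero, false_or, map_eq_zero, div_eq_zero_iff, show p.1 * p.2 + 1 ≠ 0 from hp,
    or_false] at hp0
  exact Prod.ext hp0.2 hp0.1

theorem omega2_hamFst (p u : ℂ × ℂ) :
    omega2 (hamFst p) u = ⟪p.1, u.1⟫_ℝ - ⟪p.2, u.2⟫_ℝ := by
  have h : herm2 (hamFst p) u = I * (u.1 * conj p.1 - u.2 * conj p.2) := by
    simp only [herm2, hamFst, map_mul, map_neg, conj_I]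
    ring
  rw [omega2_eq_im_herm2, h, I_mul_im, sub_re, Complex.inner, Complex.inner]

theorem omega2_hamSnd (p u : ℂ × ℂ) :
    omega2 (hamSnd p) u = ((p.1 * u.2 + p.2 * u.1) / (p.1 * p.2 + 1)).re := by
  have h : herm2 (hamSnd p) u = I * ((p.1 * u.2 + p.2 * u.1) / (p.1 * p.2 + 1)) := by
    simp only [herm2, hamSnd, map_mul, map_neg, conj_I, conj_conj]
    ring
  rw [omega2_eq_im_herm2, h, I_mul_im]

theorem re_div_eq_inner_div_sq_norm (z w : ℂ) : (z / w).re = ⟪w, z⟫_ℝ / ‖w‖ ^ 2 := by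
  rw [div_re, Complex.inner, Complex.sq_norm, mul_re, conj_re, conj_im]
  ring

theorem f0_eq_log_sq_norm : f0 = fun z : ℂ × ℂ =>
    ((‖z.1‖ ^ 2 - ‖z.2‖ ^ 2) * 2⁻¹, Real.log (‖z.1 * z.2 + 1‖ ^ 2) * 2⁻¹) := by
  ext z <;> simp only [f0, Real.log_pow] <;> ring

theorem hasFDerivAt_f0 {p : ℂ × ℂ} (hp : p ∈ X0) :
    HasFDerivAt f0 (LinearMap.toContinuousLinearMap
      ((omega2Form (hamFst p)).prod (omega2Form (hamSnd p)))) p := by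
  have hw : HasFDerivAt (fun z : ℂ × ℂ => z.1 * z.2 + 1) _ p :=
    (hasFDerivAt_fst.mul (𝕜 := ℝ) hasFDerivAt_snd).add_const 1
  have hlog := hw.norm_sq.log (pow_ne_zero 2 (norm_ne_zero_iff.mpr hp))
  have hfst : HasFDerivAt (fun z : ℂ × ℂ => ‖z.1‖ ^ 2) _ p := hasFDerivAt_fst.norm_sq
  have hsnd : HasFDerivAt (fun z : ℂ × ℂ => ‖z.2‖ ^ 2) _ p := hasFDerivAt_snd.norm_sq
  have h := ((hfst.sub hsnd).mul_const 2⁻¹).prodMk (hlog.mul_const 2⁻¹)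
  rw [f0_eq_log_sq_norm]
  refine h.congr_fderiv (ContinuousLinearMap.ext fun u => Prod.ext ?_ ?_) <;>
    simp only [ContinuousLinearMap.prod_apply, LinearMap.coe_toContinuousLinearMap',
      LinearMap.prod_apply, Function.prod_apply, omega2Form_apply, smul_apply, sub_apply, add_apply,
      ContinuousLinearMap.comp_apply, ContinuousLinearMap.coe_fst', ContinuousLinearMap.coe_snd',
      coe_innerSL_apply, nsmul_eq_mul, smul_eq_mul, Nat.cast_ofNat]
  · rw [omega2_hamFst]
    ring
  · rw [omega2_hamSnd, re_div_eq_inner_div_sq_norm]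
    ring

/-- The regular fibres of the nodal fibration are Lagrangian: at every regular point
`p ∈ X0`, the kernel of `Df_p` is a 2-dimensional subspace on which `ω` vanishes. -/
theorem stmt2 :
    ∀ p ∈ X0, p ≠ 0 →
      Module.finrank ℝ ↥(LinearMap.ker (fderiv ℝ f0 p : ℂ × ℂ →ₗ[ℝ] ℝ × ℝ)) = 2 ∧
      ∀ u ∈ LinearMap.ker (fderiv ℝ f0 p : ℂ × ℂ →ₗ[ℝ] ℝ × ℝ), ∀ v ∈ LinearMap.ker (fderiv ℝ f0 p : ℂ × ℂ →ₗ[ℝ] ℝ × ℝ),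
        omega2 u v = 0 := by
  intro p hp hp0
  set W := Submodule.span ℝ {hamFst p, hamSnd p}
  have hiso : W ≤ omega2Form.orthogonal W := by
    refine BilinForm.span_pair_le_orthogonal omega2Form_isAlt ?_
    rw [omega2Form_apply, omega2_eq_im_herm2, herm2_hamFst_hamSnd, zero_im]
  have hW : finrank ℝ W = 2 := by
    have := finrank_span_eq_card (linearIndependent_pair_of_herm2_eq_zero
      (hamFst_ne_zero hp0) (hamSnd_ne_zero hp0 hp) (herm2_hamFst_hamSnd p))
    rwa [Matrix.range_cons_cons_empty, Fintype.card_fin] at this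
  have hker : LinearMap.ker (fderiv ℝ f0 p : ℂ × ℂ →ₗ[ℝ] ℝ × ℝ) = W := by
    rw [(hasFDerivAt_f0 hp).fderiv, LinearMap.coe_toContinuousLinearMap,
      BilinForm.ker_prod_eq_orthogonal_span_pair,
      BilinForm.orthogonal_eq_self_of_le_orthogonal omega2Form_nondegenerate hiso]
    rw [hW, finrank_prod, finrank_real_complex]
  rw [hker]
  exact ⟨hW, fun u hu v hv => hiso hv u hu⟩
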